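/- Let f : ω → ω\{0} and let U_f = ∪_n N_{0^{(n)}1^{(f(n))}} ⊆ 2^ω. If lim_{n→∞} f(n) = ∞, then the point 0^∞ (the all-zeros sequence) has density 0 in U_f; consequently the closed set F = 2^ω \ U_f satisfies Φ(F) = F, i.e., F is 𝒯-regular. -/

import Mathlib

open MeasureTheory Filter Topology Set
open scoped ENNReal symmDiff

noncomputable section

/-- The Cantor space `2^ω`. -/
abbrev Cantor : Type := ℕ → Bool

/-- The first `n` digits of `x` as a finite binary string. -/
def seg (x : Cantor) (n : ℕ) : List Bool := List.ofFn (fun i : Fin n => x i)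

/-- The basic clopen set `N_s` of all extensions of the finite string `s`. -/
def cyl (s : List Bool) : Set Cantor := {x | seg x s.length = s}

/-- Concatenation `s⌢x` of a finite string with an infinite sequence. -/
def cat (s : List Bool) (x : Cantor) : Cantor :=
  fun n => if h : n < s.length then s.get ⟨n, h⟩ else x (n - s.length)

/-- The localization `A_s = {x : s⌢x ∈ A}` of `A` at `s`. -/
def loc (s : List Bool) (A : Set Cantor) : Set Cantor := {x | cat s x ∈ A}

/-- `Φ(A)`: the set of points of density `1` in `A`. -/
def dens1 (μ : Measure Cantor) (A : Set Cantor) : Set Cantor :=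
  {x | Tendsto (fun n => μ (A ∩ cyl (seg x n)) / μ (cyl (seg x n))) atTop (𝓝 1)}

/-- `μ` is the coin-tossing (Lebesgue) measure on Cantor space:
it gives each basic clopen set `N_s` measure `2^{-|s|}`. -/
def IsCoin (μ : Measure Cantor) : Prop :=
  ∀ s : List Bool, μ (cyl s) = (2 : ℝ≥0∞)⁻¹ ^ s.length

/-- The rake-shaped open set U_f determined by f. -/
def Uf (f : ℕ → ℕ) : Set Cantor :=
  ⋃ n, cyl (List.replicate n false ++ List.replicate (f n) true)

/-! Density `1` in `F = U_fᶜ` is density `0` in `U_f`, so `Φ(F) = F` says that the points of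
density `0` in `U_f` are exactly those outside `U_f`. Near `0^∞`, the set `U_f` meets `N_{0^n}`
only through the teeth `N_{0^m 1^{f m}}` with `m ≥ n` (since `f > 0`), of measure
`2^{-(m + f m)}`; once `f ≥ k` beyond `n` they add up to at most `2^{-n} · 2^{-k+1}`, so `0^∞`
has density `0` in `U_f`. Any other `x ∉ U_f` has a `1` at some place `j`, so near `x` only the
finitely many teeth with `m ≤ j` matter; each is clopen and misses `x`, hence so do all small
enough neighbourhoods of `x`. Points of the open set `U_f` have density `1` in it. -/

lemma ENNReal.tendsto_nhds_zero_iff_tendsto_nhds_one_of_add_eq_one {α : Type*} {l : Filter α}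
    {u v : α → ℝ≥0∞} (h : ∀ a, u a + v a = 1) :
    Tendsto u l (𝓝 0) ↔ Tendsto v l (𝓝 1) := by
  have hv : v = fun a => 1 - u a := funext fun a => by
    rw [← h a, ENNReal.add_sub_cancel_left (ne_top_of_le_ne_top ENNReal.one_ne_top
      (le_self_add.trans_eq (h a)))]
  have hu : u = fun a => 1 - v a := funext fun a => by
    rw [← h a, ENNReal.add_sub_cancel_right (ne_top_of_le_ne_top ENNReal.one_ne_top
      (le_add_self.trans_eq (h a)))]
  constructor
  · intro hu0
    rw [hv]
    simpa only [tsub_zero] using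
      ENNReal.Tendsto.sub tendsto_const_nhds hu0 (.inl ENNReal.one_ne_top)
  · intro hv1
    rw [hu]
    simpa only [tsub_self] using
      ENNReal.Tendsto.sub tendsto_const_nhds hv1 (.inl ENNReal.one_ne_top)

lemma length_seg (x : Cantor) (n : ℕ) : (seg x n).length = n := by simp [seg]

lemma mem_cyl {x : Cantor} {s : List Bool} :
    x ∈ cyl s ↔ ∀ i (h : i < s.length), x i = s[i] := by
  simp only [cyl, mem_ofPred_eq, seg, List.ext_get_iff, List.length_ofFn, List.get_eq_getElem,
    List.getElem_ofFn, true_and]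
  exact ⟨fun h i hi => h i hi hi, fun h i hi _ => h i hi⟩

lemma mem_cyl_seg {x y : Cantor} {m : ℕ} : y ∈ cyl (seg x m) ↔ ∀ i < m, y i = x i := by
  simp [mem_cyl, seg]

lemma measurableSet_cyl (s : List Bool) : MeasurableSet (cyl s) := by
  have : cyl s = ⋂ i : Fin s.length, (fun x : Cantor => x i) ⁻¹' {s[i]} := by
    ext x; simp [mem_cyl, Fin.forall_iff]
  rw [this]
  exact .iInter fun i => measurable_pi_apply _ (measurableSet_singleton _)

lemma cyl_seg_subset_cyl {x : Cantor} {s : List Bool} (hx : x ∈ cyl s) {m : ℕ}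
    (hm : s.length ≤ m) : cyl (seg x m) ⊆ cyl s := by
  intro y hy
  rw [mem_cyl_seg] at hy
  rw [mem_cyl] at hx ⊢
  intro i hi
  rw [hy i (by omega), hx i hi]

lemma disjoint_cyl_seg_cyl {x : Cantor} {s : List Bool} (hx : x ∉ cyl s) {m : ℕ}
    (hm : s.length ≤ m) : Disjoint (cyl (seg x m)) (cyl s) := by
  refine Set.disjoint_left.2 fun y hyx hys => hx ?_
  rw [mem_cyl_seg] at hyx
  rw [mem_cyl] at hys ⊢
  intro i hi
  rw [← hyx i (by omega), hys i hi]

def densRatio (μ : Measure Cantor) (A : Set Cantor) (x : Cantor) (n : ℕ) : ℝ≥0∞ :=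
  μ (A ∩ cyl (seg x n)) / μ (cyl (seg x n))

lemma densRatio_eq_zero_of_disjoint {μ : Measure Cantor} {A : Set Cantor} {x : Cantor} {n : ℕ}
    (h : Disjoint (cyl (seg x n)) A) : densRatio μ A x n = 0 := by
  rw [densRatio, h.symm.inter_eq, measure_empty, ENNReal.zero_div]

namespace IsCoin

variable {μ : Measure Cantor}

lemma measure_cyl_seg_ne_zero (hμ : IsCoin μ) (x : Cantor) (n : ℕ) : μ (cyl (seg x n)) ≠ 0 := by
  simp [hμ _]

lemma measure_cyl_seg_ne_top (hμ : IsCoin μ) (x : Cantor) (n : ℕ) : μ (cyl (seg x n)) ≠ ∞ := by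
  simp [hμ _]

lemma densRatio_eq_one_of_subset (hμ : IsCoin μ) {A : Set Cantor} {x : Cantor} {n : ℕ}
    (h : cyl (seg x n) ⊆ A) : densRatio μ A x n = 1 := by
  rw [densRatio, Set.inter_eq_right.2 h,
    ENNReal.div_self (hμ.measure_cyl_seg_ne_zero x n) (hμ.measure_cyl_seg_ne_top x n)]

lemma densRatio_add_densRatio_compl (hμ : IsCoin μ) {A : Set Cantor} (hA : MeasurableSet A)
    (x : Cantor) (n : ℕ) : densRatio μ A x n + densRatio μ Aᶜ x n = 1 := by
  rw [densRatio, densRatio, ENNReal.div_add_div_same, Set.inter_comm A, Set.inter_comm Aᶜ,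
    ← Set.sdiff_eq, measure_inter_add_sdiff₀ _ hA.nullMeasurableSet,
    ENNReal.div_self (hμ.measure_cyl_seg_ne_zero x n) (hμ.measure_cyl_seg_ne_top x n)]

lemma tendsto_densRatio_compl_one_iff (hμ : IsCoin μ) {A : Set Cantor} (hA : MeasurableSet A)
    (x : Cantor) :
    Tendsto (densRatio μ Aᶜ x) atTop (𝓝 1) ↔ Tendsto (densRatio μ A x) atTop (𝓝 0) :=
  (ENNReal.tendsto_nhds_zero_iff_tendsto_nhds_one_of_add_eq_one
    (hμ.densRatio_add_densRatio_compl hA x)).symm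

end IsCoin

lemma mem_cyl_replicate_append {y : Cantor} {n q : ℕ} :
    y ∈ cyl (List.replicate n false ++ List.replicate q true) ↔
      (∀ i < n, y i = false) ∧ ∀ i, n ≤ i → i < n + q → y i = true := by
  simp only [mem_cyl, List.length_append, List.length_replicate, List.getElem_append,
    List.getElem_replicate]
  constructor
  · intro h
    exact ⟨fun i hi => by simpa [hi] using h i (by omega),
      fun i hni hi => by simpa [hni.not_gt] using h i hi⟩
  · rintro ⟨h0, h1⟩ i hi
    split_ifs with hin
    · exact h0 i hin
    · exact h1 i (by omega) hi

lemma measurableSet_Uf (f : ℕ → ℕ) : MeasurableSet (Uf f) :=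
  .iUnion fun _ => measurableSet_cyl _

lemma Uf_inter_cyl_zero_subset {f : ℕ → ℕ} (hf0 : ∀ n, 0 < f n) (n : ℕ) :
    Uf f ∩ cyl (seg (fun _ => false) n) ⊆
      ⋃ m, cyl (List.replicate (n + m) false ++ List.replicate (f (n + m)) true) := by
  rintro y ⟨hyU, hy0⟩
  obtain ⟨p, hp⟩ := Set.mem_iUnion.1 hyU
  rw [mem_cyl_replicate_append] at hp
  rw [mem_cyl_seg] at hy0
  have hnp : n ≤ p := by
    by_contra! hpn
    simpa [hy0 p hpn] using hp.2 p le_rfl (by have := hf0 p; omega)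
  exact Set.mem_iUnion.2 ⟨p - n, by rwa [Nat.add_sub_cancel' hnp, mem_cyl_replicate_append]⟩

lemma IsCoin.measure_Uf_inter_cyl_zero_le {μ : Measure Cantor} (hμ : IsCoin μ) {f : ℕ → ℕ}
    (hf0 : ∀ n, 0 < f n) {n k : ℕ} (hk : ∀ m ≥ n, k ≤ f m) :
    μ (Uf f ∩ cyl (seg (fun _ => false) n)) ≤ 2 * 2⁻¹ ^ k * 2⁻¹ ^ n := by
  have hterm : ∀ m, (2⁻¹ : ℝ≥0∞) ^ (n + m + f (n + m)) ≤ 2⁻¹ ^ k * 2⁻¹ ^ n * 2⁻¹ ^ m := by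
    intro m
    rw [← pow_add, ← pow_add]
    exact pow_le_pow_of_le_one zero_le (by norm_num) (by have := hk (n + m) (by omega); omega)
  calc μ (Uf f ∩ cyl (seg (fun _ => false) n))
      ≤ ∑' m, μ (cyl (List.replicate (n + m) false ++ List.replicate (f (n + m)) true)) :=
        (measure_mono (Uf_inter_cyl_zero_subset hf0 n)).trans (measure_iUnion_le _)
    _ = ∑' m, (2⁻¹ : ℝ≥0∞) ^ (n + m + f (n + m)) := by simp [hμ _]
    _ ≤ ∑' m, 2⁻¹ ^ k * 2⁻¹ ^ n * 2⁻¹ ^ m := ENNReal.tsum_le_tsum hterm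
    _ = 2 * 2⁻¹ ^ k * 2⁻¹ ^ n := by
        rw [ENNReal.tsum_mul_left, ENNReal.tsum_geometric, ENNReal.one_sub_inv_two, inv_inv]
        ring

lemma IsCoin.tendsto_densRatio_Uf_zero {μ : Measure Cantor} (hμ : IsCoin μ) {f : ℕ → ℕ}
    (hf0 : ∀ n, 0 < f n) (hf : Tendsto f atTop atTop) :
    Tendsto (densRatio μ (Uf f) fun _ => false) atTop (𝓝 0) := by
  rw [ENNReal.tendsto_atTop_zero]
  intro ε hε
  obtain ⟨k, hk⟩ := ENNReal.exists_inv_two_pow_lt hε.ne'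
  obtain ⟨N, hN⟩ := eventually_atTop.1 (hf.eventually_ge_atTop (k + 1))
  refine ⟨N, fun n hn => ENNReal.div_le_of_le_mul ?_⟩
  calc μ (Uf f ∩ cyl (seg (fun _ => false) n))
      ≤ 2 * 2⁻¹ ^ (k + 1) * 2⁻¹ ^ n :=
        hμ.measure_Uf_inter_cyl_zero_le hf0 fun m hm => hN m (hn.trans hm)
    _ = 2⁻¹ ^ k * μ (cyl (seg (fun _ => false) n)) := by
        rw [hμ, length_seg, pow_succ, mul_comm (2⁻¹ ^ k), ← mul_assoc,
          ENNReal.mul_inv_cancel two_ne_zero ENNReal.ofNat_ne_top, one_mul]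
    _ ≤ ε * μ (cyl (seg (fun _ => false) n)) := by gcongr

lemma eventually_cyl_seg_subset_Uf {f : ℕ → ℕ} {x : Cantor} (hx : x ∈ Uf f) :
    ∀ᶠ m in atTop, cyl (seg x m) ⊆ Uf f := by
  obtain ⟨p, hp⟩ := Set.mem_iUnion.1 hx
  filter_upwards [eventually_ge_atTop _] with m hm
  exact (cyl_seg_subset_cyl hp hm).trans (Set.subset_iUnion_of_subset p subset_rfl)

lemma eventually_disjoint_cyl_seg_Uf {f : ℕ → ℕ} {x : Cantor} (hx : x ∉ Uf f) {j : ℕ}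
    (hj : x j = true) : ∀ᶠ m in atTop, Disjoint (cyl (seg x m)) (Uf f) := by
  have hle : ∀ᶠ m in atTop, ∀ p ∈ {p | p ≤ j},
      Disjoint (cyl (seg x m)) (cyl (List.replicate p false ++ List.replicate (f p) true)) :=
    (eventually_all_finite (Set.finite_le_nat j)).2 fun p _ =>
      (eventually_ge_atTop _).mono fun m hm =>
        disjoint_cyl_seg_cyl (fun hp => hx (Set.mem_iUnion.2 ⟨p, hp⟩)) hm
  filter_upwards [hle, eventually_gt_atTop j] with m hdisj hjm
  refine Set.disjoint_iUnion_right.2 fun p => ?_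
  by_cases hpj : p ≤ j
  · exact hdisj p hpj
  · refine Set.disjoint_left.2 fun y hy hyp => ?_
    have := (mem_cyl_replicate_append.1 hyp).1 j (by omega)
    rw [(mem_cyl_seg.1 hy) j hjm, hj] at this
    exact Bool.noConfusion this

lemma IsCoin.tendsto_densRatio_Uf_zero_iff {μ : Measure Cantor} (hμ : IsCoin μ) {f : ℕ → ℕ}
    (hf0 : ∀ n, 0 < f n) (hf : Tendsto f atTop atTop) (x : Cantor) :
    Tendsto (densRatio μ (Uf f) x) atTop (𝓝 0) ↔ x ∉ Uf f := by
  refine ⟨fun h hx => ?_, fun hx => ?_⟩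
  · have h1 : Tendsto (densRatio μ (Uf f) x) atTop (𝓝 1) :=
      tendsto_const_nhds.congr' <| (eventually_cyl_seg_subset_Uf hx).mono fun m hm =>
        (hμ.densRatio_eq_one_of_subset hm).symm
    exact one_ne_zero (tendsto_nhds_unique h1 h)
  by_cases hx0 : ∃ j, x j = true
  · obtain ⟨j, hj⟩ := hx0
    exact tendsto_const_nhds.congr' <| (eventually_disjoint_cyl_seg_Uf hx hj).mono fun m hm =>
      (densRatio_eq_zero_of_disjoint hm).symm
  · obtain rfl : x = fun _ => false := funext fun i => by simpa using not_exists.1 hx0 i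
    exact hμ.tendsto_densRatio_Uf_zero hf0 hf

/-- If f(n) → ∞ then 0^∞ has density 0 in U_f, and the closed complement of U_f is
𝒯-regular. -/
theorem stmt15 (μ : Measure Cantor) (hμ : IsCoin μ) (f : ℕ → ℕ) (hf0 : ∀ n, 0 < f n)
    (hf : Tendsto f atTop atTop) :
    Tendsto (fun n =>
        μ (Uf f ∩ cyl (seg (fun _ => false) n)) / μ (cyl (seg (fun _ => false) n)))
      atTop (𝓝 0) ∧
    dens1 μ (Uf f)ᶜ = (Uf f)ᶜ := by
  refine ⟨hμ.tendsto_densRatio_Uf_zero hf0 hf, Set.ext fun x => ?_⟩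
  exact (hμ.tendsto_densRatio_compl_one_iff (measurableSet_Uf f) x).trans
    (hμ.tendsto_densRatio_Uf_zero_iff hf0 hf x)
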